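/- arXiv:2405.20763 — 2 statements merged into one kernel-verified Lean document; each statement's English description precedes it below -/
import Mathlib

section
/- Davis–Kahan sin(Θ) theorem (projection-gap corollary): Let A, B ∈ ℝ^{p×p} be symmetric with ‖A − B‖ ≤ μ/4, where the top-m eigenvalues of B are ≥ μ > 0 and the remaining p−m eigenvalues of B are 0. Let P_A and P_B denote the orthogonal projections onto the span of the eigenvectors of A (resp. B) associated with the p−m smallest eigenvalues. Then ‖P_A − P_B‖_F ≤ (4√2 min(m, p−m)/μ) ‖A − B‖. -/
/-!
Write `C = Uᵀ V` for the matrix of inner products of the two eigenbases and `S` for the indices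
`k ≥ m`. Expanding the squares, `‖P_A - P_B‖_F² = 2 ∑_{k ∈ S, l ∉ S} C_{kl}²`. Conjugating
`E = A - B` by the eigenbases gives `(Uᵀ E V)_{kl} = (λ_k - μ_l) C_{kl}`, and every row and column
of `Uᵀ E V` has Euclidean norm at most `‖E‖`, so `∑_{k ∈ S, l ∉ S} (Uᵀ E V)_{kl}² ≤
min(m, p - m) ‖E‖²`. By Weyl's inequality `λ_k ≤ μ_k + ‖E‖ ≤ μ/4` for `k ∈ S`, while `μ_l ≥ μ`
for `l ∉ S`, so the gap `|λ_k - μ_l| ≥ 3μ/4` turns this into the bound on the `C_{kl}`.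
-/

open Matrix
open scoped Matrix.Norms.L2Operator

variable {ι : Type*} [Fintype ι]

namespace Matrix

lemma dotProduct_self_eq_norm_sq (x : ι → ℝ) : x ⬝ᵥ x = ‖WithLp.toLp 2 x‖ ^ 2 := by
  rw [← real_inner_self_eq_norm_sq, EuclideanSpace.inner_toLp_toLp, star_trivial]

lemma mul_dotProduct_self_le_sum_mul_sq {c : ℝ} {d y : ι → ℝ}
    (h : ∀ i, y i ≠ 0 → c ≤ d i) : c * (y ⬝ᵥ y) ≤ ∑ i, d i * y i ^ 2 := by
  rw [dotProduct, Finset.mul_sum]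
  refine Finset.sum_le_sum fun i _ => ?_
  rcases eq_or_ne (y i) 0 with hy | hy
  · simp [hy]
  · rw [← sq]
    exact mul_le_mul_of_nonneg_right (h i hy) (sq_nonneg _)

lemma sum_mul_sq_le_mul_dotProduct_self {c : ℝ} {d y : ι → ℝ}
    (h : ∀ i, y i ≠ 0 → d i ≤ c) : ∑ i, d i * y i ^ 2 ≤ c * (y ⬝ᵥ y) := by
  simpa [neg_mul, Finset.sum_neg_distrib] using
    mul_dotProduct_self_le_sum_mul_sq (c := -c) (d := -d) fun i hi => neg_le_neg (h i hi)

/-- Only `card ι - 1` linear conditions are imposed, so they have a nonzero common solution. -/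
lemma exists_ne_zero_mulVec_apply_eq_zero [LinearOrder ι] (M N : Matrix ι ι ℝ) (k : ι) :
    ∃ x ≠ 0, (∀ i, k < i → (M *ᵥ x) i = 0) ∧ ∀ i, i < k → (N *ᵥ x) i = 0 := by
  have hcard : Fintype.card {i // i < k} + Fintype.card {i // k < i} < Fintype.card ι := by
    simp only [Fintype.card_subtype, ← Finset.card_union_of_disjoint
      (Finset.disjoint_filter.mpr fun i _ h1 h2 => lt_asymm h1 h2)]
    exact Finset.card_lt_card (Finset.ssubset_iff.mpr ⟨k, by simp, Finset.subset_univ _⟩)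
  let f : (ι → ℝ) →ₗ[ℝ] ({i // k < i} → ℝ) × ({i // i < k} → ℝ) :=
    (LinearMap.funLeft ℝ ℝ Subtype.val ∘ₗ M.mulVecLin).prod
      (LinearMap.funLeft ℝ ℝ Subtype.val ∘ₗ N.mulVecLin)
  obtain ⟨x, hx, hx0⟩ := Submodule.exists_mem_ne_zero_of_ne_bot <|
    f.ker_ne_bot_of_finrank_lt (by simpa [add_comm] using hcard)
  exact ⟨x, hx0, fun i hi => congrFun (congrArg Prod.fst hx) ⟨i, hi⟩,
    fun i hi => congrFun (congrArg Prod.snd hx) ⟨i, hi⟩⟩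

lemma sum_sum_mul_sum_vecMulVec {κ κ' : Type*} (x : κ → ι → ℝ) (y : κ' → ι → ℝ)
    (s : Finset κ) (t : Finset κ') :
    ∑ i, ∑ j, (∑ k ∈ s, vecMulVec (x k) (x k)) i j * (∑ l ∈ t, vecMulVec (y l) (y l)) i j
      = ∑ k ∈ s, ∑ l ∈ t, (x k ⬝ᵥ y l) ^ 2 := by
  simp only [Matrix.sum_apply, vecMulVec_apply, dotProduct, sq, Finset.sum_mul_sum]
  simp_rw [Finset.sum_comm (s := s), Finset.sum_comm (s := t) (t := (Finset.univ : Finset ι))]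
  exact Finset.sum_congr rfl fun _ _ => Finset.sum_congr rfl fun _ _ =>
    Finset.sum_congr rfl fun _ _ => Finset.sum_congr rfl fun _ _ => by ring

lemma sum_sum_sq_le_min_card_mul {κ κ' : Type*} [Fintype κ] [Fintype κ'] {M : Matrix κ κ' ℝ}
    {c : ℝ} (hrow : ∀ k, ∑ l, M k l ^ 2 ≤ c) (hcol : ∀ l, ∑ k, M k l ^ 2 ≤ c)
    (s : Finset κ) (t : Finset κ') :
    ∑ k ∈ s, ∑ l ∈ t, M k l ^ 2 ≤ (min s.card t.card : ℕ) * c := by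
  have hs : ∑ k ∈ s, ∑ l ∈ t, M k l ^ 2 ≤ s.card * c := by
    refine (Finset.sum_le_sum fun k _ => ?_).trans_eq (by rw [Finset.sum_const, nsmul_eq_mul])
    exact (Finset.sum_le_sum_of_subset_of_nonneg t.subset_univ fun _ _ _ => sq_nonneg _).trans
      (hrow k)
  have ht : ∑ k ∈ s, ∑ l ∈ t, M k l ^ 2 ≤ t.card * c := by
    rw [Finset.sum_comm]
    refine (Finset.sum_le_sum fun l _ => ?_).trans_eq (by rw [Finset.sum_const, nsmul_eq_mul])
    exact (Finset.sum_le_sum_of_subset_of_nonneg s.subset_univ fun _ _ _ => sq_nonneg _).trans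
      (hcol l)
  rcases min_choice s.card t.card with h | h <;> rw [h] <;> assumption

variable [DecidableEq ι]

lemma dotProduct_mulVec_le_l2_opNorm_mul (E : Matrix ι ι ℝ) (x : ι → ℝ) :
    x ⬝ᵥ E *ᵥ x ≤ ‖E‖ * (x ⬝ᵥ x) := by
  have h := real_inner_le_norm (WithLp.toLp 2 x) (WithLp.toLp 2 (E *ᵥ x))
  rw [EuclideanSpace.inner_toLp_toLp, star_trivial, dotProduct_comm] at h
  calc x ⬝ᵥ E *ᵥ x ≤ ‖WithLp.toLp 2 x‖ * ‖WithLp.toLp 2 (E *ᵥ x)‖ := h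
    _ ≤ ‖WithLp.toLp 2 x‖ * (‖E‖ * ‖WithLp.toLp 2 x‖) := by
      gcongr
      exact l2_opNorm_mulVec E _
    _ = ‖E‖ * (x ⬝ᵥ x) := by rw [dotProduct_self_eq_norm_sq]; ring

lemma mulVec_dotProduct_self_le (E : Matrix ι ι ℝ) (x : ι → ℝ) :
    E *ᵥ x ⬝ᵥ E *ᵥ x ≤ ‖E‖ ^ 2 * (x ⬝ᵥ x) := by
  rw [dotProduct_self_eq_norm_sq, dotProduct_self_eq_norm_sq, ← mul_pow]
  gcongr
  exact l2_opNorm_mulVec E _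

lemma transpose_mulVec_dotProduct_self {U : Matrix ι ι ℝ} (hU : Uᵀ * U = 1) (x : ι → ℝ) :
    Uᵀ *ᵥ x ⬝ᵥ Uᵀ *ᵥ x = x ⬝ᵥ x := by
  rw [dotProduct_mulVec, vecMul_transpose, mulVec_mulVec, mul_eq_one_comm.mp hU, one_mulVec]

lemma dotProduct_conj_diagonal_mulVec (U : Matrix ι ι ℝ) (d x : ι → ℝ) :
    x ⬝ᵥ (U * diagonal d * Uᵀ) *ᵥ x = ∑ i, d i * (Uᵀ *ᵥ x) i ^ 2 := by
  rw [← mulVec_mulVec, ← mulVec_mulVec, dotProduct_mulVec, ← mulVec_transpose]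
  simp only [dotProduct, mulVec_diagonal, sq]
  exact Finset.sum_congr rfl fun i _ => by ring

/-- Weyl's inequality. -/
lemma eigenvalue_le_add_l2_opNorm_sub [LinearOrder ι] {U V : Matrix ι ι ℝ} (hU : Uᵀ * U = 1)
    (hV : Vᵀ * V = 1) {lam mu : ι → ℝ} (hlam : Antitone lam) (hmu : Antitone mu) (k : ι) :
    lam k ≤ mu k + ‖U * diagonal lam * Uᵀ - V * diagonal mu * Vᵀ‖ := by
  obtain ⟨x, hx0, hUx, hVx⟩ := exists_ne_zero_mulVec_apply_eq_zero Uᵀ Vᵀ k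
  have hxx : 0 < x ⬝ᵥ x := by
    rw [dotProduct_self_eq_norm_sq]
    exact pow_pos (norm_pos_iff.mpr fun h => hx0 (congrArg WithLp.ofLp h)) 2
  have hA : lam k * (x ⬝ᵥ x) ≤ x ⬝ᵥ (U * diagonal lam * Uᵀ) *ᵥ x := by
    rw [dotProduct_conj_diagonal_mulVec, ← transpose_mulVec_dotProduct_self hU x]
    exact mul_dotProduct_self_le_sum_mul_sq fun i hi => hlam (not_lt.mp (mt (hUx i) hi))
  have hB : x ⬝ᵥ (V * diagonal mu * Vᵀ) *ᵥ x ≤ mu k * (x ⬝ᵥ x) := by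
    rw [dotProduct_conj_diagonal_mulVec, ← transpose_mulVec_dotProduct_self hV x]
    exact sum_mul_sq_le_mul_dotProduct_self fun i hi => hmu (not_lt.mp (mt (hVx i) hi))
  have hE := dotProduct_mulVec_le_l2_opNorm_mul (U * diagonal lam * Uᵀ - V * diagonal mu * Vᵀ) x
  rw [sub_mulVec, dotProduct_sub] at hE
  nlinarith

lemma transpose_mul_conj_diagonal_sub_mul_apply {U V : Matrix ι ι ℝ} (hU : Uᵀ * U = 1)
    (hV : Vᵀ * V = 1) (lam mu : ι → ℝ) (k l : ι) :
    (Uᵀ * (U * diagonal lam * Uᵀ - V * diagonal mu * Vᵀ) * V) k l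
      = (lam k - mu l) * (Uᵀ * V) k l := by
  have hA : Uᵀ * (U * diagonal lam * Uᵀ) * V = diagonal lam * (Uᵀ * V) := by
    simp only [← Matrix.mul_assoc, hU, Matrix.one_mul]
  have hB : Uᵀ * (V * diagonal mu * Vᵀ) * V = Uᵀ * V * diagonal mu := by
    simp only [Matrix.mul_assoc, hV, Matrix.mul_one]
  rw [Matrix.mul_sub, Matrix.sub_mul, hA, hB, sub_apply, diagonal_mul, mul_diagonal]
  ring

lemma sum_sq_transpose_mul_mul_apply_le {U V : Matrix ι ι ℝ} (hU : Uᵀ * U = 1)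
    (hV : Vᵀ * V = 1) (E : Matrix ι ι ℝ) (l : ι) :
    ∑ k, (Uᵀ * E * V) k l ^ 2 ≤ ‖E‖ ^ 2 := by
  set v : ι → ℝ := fun i => V i l
  have hv : v ⬝ᵥ v = 1 := by
    simpa [mul_apply, dotProduct] using congrFun (congrFun hV l) l
  calc ∑ k, (Uᵀ * E * V) k l ^ 2 = Uᵀ *ᵥ E *ᵥ v ⬝ᵥ Uᵀ *ᵥ E *ᵥ v := by
        simp only [dotProduct, sq, mulVec_mulVec]
        rfl
    _ ≤ ‖E‖ ^ 2 := by
        rw [transpose_mulVec_dotProduct_self hU]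
        simpa [hv] using mulVec_dotProduct_self_le E v

theorem davis_kahan_sin_theta {U V : Matrix ι ι ℝ} (hU : Uᵀ * U = 1) (hV : Vᵀ * V = 1)
    {lam mu : ι → ℝ} (s t : Finset ι) {δ : ℝ} (hδ : 0 ≤ δ)
    (hsep : ∀ k ∈ s, ∀ l ∈ t, δ ≤ |lam k - mu l|) :
    δ ^ 2 * ∑ k ∈ s, ∑ l ∈ t, (Uᵀ * V) k l ^ 2
      ≤ (min s.card t.card : ℕ) * ‖U * diagonal lam * Uᵀ - V * diagonal mu * Vᵀ‖ ^ 2 := by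
  set E := U * diagonal lam * Uᵀ - V * diagonal mu * Vᵀ
  have hcol := sum_sq_transpose_mul_mul_apply_le hU hV E
  have hrow : ∀ k, ∑ l, (Uᵀ * E * V) k l ^ 2 ≤ ‖E‖ ^ 2 := fun k => by
    have hnorm : ‖Eᵀ‖ = ‖E‖ := by
      rw [← conjTranspose_eq_transpose_of_trivial, l2_opNorm_conjTranspose]
    have hVEU : Vᵀ * Eᵀ * U = (Uᵀ * E * V)ᵀ := by
      simp only [transpose_mul, transpose_transpose, Matrix.mul_assoc]
    simpa only [hnorm, hVEU, transpose_apply] using sum_sq_transpose_mul_mul_apply_le hV hU Eᵀ k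
  refine le_trans ?_ (sum_sum_sq_le_min_card_mul hrow hcol s t)
  simp only [Finset.mul_sum]
  refine Finset.sum_le_sum fun k hk => Finset.sum_le_sum fun l hl => ?_
  rw [transpose_mul_conj_diagonal_sub_mul_apply hU hV, mul_pow, ← sq_abs (lam k - mu l)]
  exact mul_le_mul_of_nonneg_right (pow_le_pow_left₀ hδ (hsep k hk l hl) 2) (sq_nonneg _)

/-- The orthogonal projection onto the span of the columns of `U` indexed by `s`, when the columns
of `U` are orthonormal. -/
def colProj (U : Matrix ι ι ℝ) (s : Finset ι) : Matrix ι ι ℝ :=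
  ∑ k ∈ s, vecMulVec (fun i => U i k) (fun i => U i k)

lemma sum_sq_transpose_mul_apply {U V : Matrix ι ι ℝ} (hU : Uᵀ * U = 1) (hV : Vᵀ * V = 1)
    (k : ι) : ∑ l, (Uᵀ * V) k l ^ 2 = 1 := by
  have h : (Uᵀ * V) * (Uᵀ * V)ᵀ = 1 := by
    rw [transpose_mul, transpose_transpose, Matrix.mul_assoc, ← Matrix.mul_assoc V,
      mul_eq_one_comm.mp hV, Matrix.one_mul, hU]
  have hkk := congrFun (congrFun h k) k
  rw [mul_apply] at hkk
  simpa only [transpose_apply, one_apply_eq, sq] using hkk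

lemma sum_sq_colProj_sub_colProj {U V : Matrix ι ι ℝ} (hU : Uᵀ * U = 1) (hV : Vᵀ * V = 1)
    (s : Finset ι) :
    ∑ i, ∑ j, (colProj U s - colProj V s) i j ^ 2
      = 2 * ∑ k ∈ s, ∑ l ∈ sᶜ, (Uᵀ * V) k l ^ 2 := by
  have hgram : ∀ W W' : Matrix ι ι ℝ, ∑ i, ∑ j, colProj W s i j * colProj W' s i j
      = ∑ k ∈ s, ∑ l ∈ s, (Wᵀ * W') k l ^ 2 := fun W W' =>
    sum_sum_mul_sum_vecMulVec _ _ s s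
  have hself : ∀ W : Matrix ι ι ℝ, Wᵀ * W = 1 →
      ∑ k ∈ s, ∑ l ∈ s, (Wᵀ * W) k l ^ 2 = s.card := by
    intro W hW
    simp [hW, one_apply]
  have hcross : ∑ k ∈ s, ∑ l ∈ s, (Uᵀ * V) k l ^ 2
      = s.card - ∑ k ∈ s, ∑ l ∈ sᶜ, (Uᵀ * V) k l ^ 2 := by
    rw [eq_sub_iff_add_eq, ← Finset.sum_add_distrib, Finset.card_eq_sum_ones, Nat.cast_sum]
    exact Finset.sum_congr rfl fun k _ => by
      rw [Finset.sum_add_sum_compl, sum_sq_transpose_mul_apply hU hV, Nat.cast_one]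
  calc ∑ i, ∑ j, (colProj U s - colProj V s) i j ^ 2
      = ∑ i, ∑ j, colProj U s i j * colProj U s i j
        - 2 * ∑ i, ∑ j, colProj U s i j * colProj V s i j
        + ∑ i, ∑ j, colProj V s i j * colProj V s i j := by
        simp only [Matrix.sub_apply, Finset.mul_sum, ← Finset.sum_sub_distrib,
          ← Finset.sum_add_distrib]
        exact Finset.sum_congr rfl fun i _ => Finset.sum_congr rfl fun j _ => by ring
    _ = 2 * ∑ k ∈ s, ∑ l ∈ sᶜ, (Uᵀ * V) k l ^ 2 := by
        rw [hgram, hgram, hgram, hself U hU, hself V hV, hcross]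
        ring

end Matrix

lemma sqrt_two_mul_le_of_sq_mul_le {μ X ε : ℝ} {n N : ℕ} (hμ : 0 < μ) (hε : 0 ≤ ε) (hN : n ≤ N)
    (h : (3 * μ / 4) ^ 2 * X ≤ n * ε ^ 2) : √(2 * X) ≤ 4 * √2 * N / μ * ε := by
  have hnN : (n : ℝ) ≤ (N : ℝ) ^ 2 := by
    exact_mod_cast hN.trans (Nat.le_self_pow two_ne_zero N)
  rw [Real.sqrt_le_left (by positivity), div_mul_eq_mul_div, div_pow, le_div_iff₀ (by positivity),
    mul_pow, mul_pow, mul_pow, Real.sq_sqrt zero_le_two]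
  nlinarith [mul_le_mul_of_nonneg_right hnN (sq_nonneg ε)]

theorem davis_kahan_projection_gap_general
    {p m : ℕ}
    (A B U V : Matrix (Fin p) (Fin p) ℝ)
    (lam mu : Fin p → ℝ)
    (hU : Uᵀ * U = 1) (hV : Vᵀ * V = 1)
    (hAdec : A = U * Matrix.diagonal lam * Uᵀ)
    (hBdec : B = V * Matrix.diagonal mu * Vᵀ)
    (hlam : Antitone lam) (hmu : Antitone mu)
    (μc : ℝ) (hμc : 0 < μc)
    (hmu_top : ∀ k : Fin p, (k : ℕ) < m → μc ≤ mu k)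
    (hmu_bot : ∀ k : Fin p, m ≤ (k : ℕ) → mu k = 0)
    (hgap : ‖Matrix.toEuclideanCLM (𝕜 := ℝ) (A - B)‖ ≤ μc / 4) :
    Real.sqrt (∑ i, ∑ j,
        (((∑ k ∈ Finset.univ.filter (fun k : Fin p => m ≤ (k : ℕ)),
              vecMulVec (fun i => U i k) (fun i => U i k))
          - (∑ k ∈ Finset.univ.filter (fun k : Fin p => m ≤ (k : ℕ)),
              vecMulVec (fun i => V i k) (fun i => V i k))) i j) ^ 2)
      ≤ (4 * Real.sqrt 2 * (min m (p - m)) / μc)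
          * ‖Matrix.toEuclideanCLM (𝕜 := ℝ) (A - B)‖ := by
  subst hAdec hBdec
  set S := Finset.univ.filter (fun k : Fin p => m ≤ (k : ℕ))
  have hsep : ∀ k ∈ S, ∀ l ∈ Sᶜ, 3 * μc / 4 ≤ |lam k - mu l| := by
    intro k hk l hl
    have hweyl := eigenvalue_le_add_l2_opNorm_sub hU hV hlam hmu k
    rw [hmu_bot k (Finset.mem_filter.mp hk).2, ← l2_opNorm_toEuclideanCLM] at hweyl
    have hmul : μc ≤ mu l := hmu_top l (by simpa [S] using hl)
    rw [abs_sub_comm, abs_of_pos (by linarith)]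
    linarith
  have hcard : min S.card Sᶜ.card ≤ min m (p - m) := by
    have hSc : Sᶜ.card = min p m := by
      rw [← Fin.card_filter_val_lt]
      congr 1
      ext k
      simp [S]
    have hsum : S.card + Sᶜ.card = p := by simp [Finset.card_add_card_compl]
    omega
  change √(∑ i, ∑ j, (colProj U S - colProj V S) i j ^ 2) ≤ _
  rw [sum_sq_colProj_sub_colProj hU hV]
  exact sqrt_two_mul_le_of_sq_mul_le hμc (norm_nonneg _) hcard
    (davis_kahan_sin_theta hU hV S Sᶜ (by positivity) hsep)

/-- Davis–Kahan `sin Θ`, projection-gap corollary: Let `A, B` be symmetric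
with spectral decompositions `A = U diag(λ) Uᵀ`, `B = V diag(μ) Vᵀ` (columns ordered by
decreasing eigenvalue), where the top `m` eigenvalues of `B` are `≥ μc > 0`, the remaining
`p − m` eigenvalues of `B` vanish, and `‖A − B‖ ≤ μc/4` in spectral norm. Let `P_A, P_B`
be the orthogonal projections onto the eigenspaces of the `p − m` smallest eigenvalues.
Then `‖P_A − P_B‖_F ≤ (4√2 min(m, p−m)/μc) ‖A − B‖`. -/
theorem davis_kahan_projection_gap
    {p m : ℕ} (hmp : m < p)
    (A B U V : Matrix (Fin p) (Fin p) ℝ)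
    (lam mu : Fin p → ℝ)
    (hU : Uᵀ * U = 1) (hV : Vᵀ * V = 1)
    (hAdec : A = U * Matrix.diagonal lam * Uᵀ)
    (hBdec : B = V * Matrix.diagonal mu * Vᵀ)
    (hlam : Antitone lam) (hmu : Antitone mu)
    (μc : ℝ) (hμc : 0 < μc)
    (hmu_top : ∀ k : Fin p, (k : ℕ) < m → μc ≤ mu k)
    (hmu_bot : ∀ k : Fin p, m ≤ (k : ℕ) → mu k = 0)
    (hgap : ‖Matrix.toEuclideanCLM (𝕜 := ℝ) (A - B)‖ ≤ μc / 4) :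
    Real.sqrt (∑ i, ∑ j,
        (((∑ k ∈ Finset.univ.filter (fun k : Fin p => m ≤ (k : ℕ)),
              vecMulVec (fun i => U i k) (fun i => U i k))
          - (∑ k ∈ Finset.univ.filter (fun k : Fin p => m ≤ (k : ℕ)),
              vecMulVec (fun i => V i k) (fun i => V i k))) i j) ^ 2)
      ≤ (4 * Real.sqrt 2 * (min m (p - m)) / μc)
          * ‖Matrix.toEuclideanCLM (𝕜 := ℝ) (A - B)‖ :=
  davis_kahan_projection_gap_general A B U V lam mu hU hV hAdec hBdec hlam hmu μc hμc hmu_top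
    hmu_bot hgap
end

section
/- Let L be β-smooth, μ-PL (‖∇L‖² ≥ 2μ L, with min L = 0), and consider the SAM-type bound: for θ⁺ = θ − η∇L(θ + ρv) with ‖v‖ = 1 and η ≤ 1/(4β), one has E-free deterministic bound L(θ⁺) ≤ L(θ) − (3η/4)‖∇L(θ)‖² + ηρ‖∇²L(θ)∇L(θ)‖ + (ηρ²β₃/2)‖∇L(θ)‖ + η²β(‖∇L(θ)‖² + ρ²β²), assuming ‖∇²L‖ ≤ β and the Hessian is β₃-Lipschitz on the relevant region. -/
/-!
Write `g⁺ = ∇L(θ + ρv)`. Since the gradient is `β`-Lipschitz, the descent inequality gives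
`L(θ - ηg⁺) ≤ L(θ) - η⟪∇L(θ), g⁺⟫ + (βη²/2)‖g⁺‖²`, and `‖g⁺‖² ≤ 2‖∇L(θ)‖² + 2ρ²β²`.
Since the Hessian `H` is `β₃`-Lipschitz, `g⁺ = ∇L(θ) + ρHv + r` with `‖r‖ ≤ β₃ρ²/2`, and the
symmetry of `H` turns `⟪∇L(θ), Hv⟫` into `⟪H∇L(θ), v⟫ ≥ -‖H∇L(θ)‖`.
The descent inequality and the bound on `r` are both the first-order Taylor estimate for a map
with `K`-Lipschitz derivative, obtained by fencing `‖f(x + td) - f x - t f'(x) d‖` with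
`Kt²‖d‖²/2`.
-/

open InnerProductSpace Set

theorem sq_norm_apply_add_le {E G : Type*} [SeminormedAddCommGroup E]
    [SeminormedAddCommGroup G] {g : E → G} {β : ℝ}
    (hg : ∀ x y, ‖g x - g y‖ ≤ β * ‖x - y‖) (x d : E) :
    ‖g (x + d)‖ ^ 2 ≤ 2 * (‖g x‖ ^ 2 + β ^ 2 * ‖d‖ ^ 2) := by
  have h : ‖g (x + d)‖ ≤ ‖g x‖ + β * ‖d‖ :=
    calc ‖g (x + d)‖ ≤ ‖g x‖ + ‖g (x + d) - g x‖ := norm_le_norm_add_norm_sub' _ _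
      _ ≤ ‖g x‖ + β * ‖d‖ := by gcongr; simpa using hg (x + d) x
  nlinarith [norm_nonneg (g (x + d)), sq_nonneg (‖g x‖ - β * ‖d‖)]

section Taylor

variable {E G : Type*} [NormedAddCommGroup E] [NormedSpace ℝ E]
  [NormedAddCommGroup G] [NormedSpace ℝ G]

theorem norm_sub_sub_fderiv_le_of_lipschitz_fderiv {f : E → G} {K : ℝ}
    (hf : Differentiable ℝ f) (hf' : ∀ x y, ‖fderiv ℝ f x - fderiv ℝ f y‖ ≤ K * ‖x - y‖)
    (x d : E) : ‖f (x + d) - f x - fderiv ℝ f x d‖ ≤ K / 2 * ‖d‖ ^ 2 := by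
  set g : ℝ → G := fun t => f (x + t • d) - f x - t • fderiv ℝ f x d
  have hg : ∀ t, HasDerivAt g (fderiv ℝ f (x + t • d) d - fderiv ℝ f x d) t := by
    intro t
    have hline : HasDerivAt (fun s : ℝ => x + s • d) d t := by
      simpa using ((hasDerivAt_id t).smul_const d).const_add x
    exact (((hf _).hasFDerivAt.comp_hasDerivAt t hline).sub_const (f x)).sub
      (by simpa using (hasDerivAt_id t).smul_const (fderiv ℝ f x d))
  have hB : ∀ t, HasDerivAt (fun s : ℝ => K / 2 * s ^ 2 * ‖d‖ ^ 2) (K * t * ‖d‖ ^ 2) t := by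
    intro t
    exact (((hasDerivAt_pow 2 t).const_mul (K / 2)).mul_const (‖d‖ ^ 2)).congr_deriv
      (by push_cast; ring)
  have hbound : ∀ t ∈ Ico (0 : ℝ) 1,
      ‖fderiv ℝ f (x + t • d) d - fderiv ℝ f x d‖ ≤ K * t * ‖d‖ ^ 2 := by
    intro t ht
    calc ‖fderiv ℝ f (x + t • d) d - fderiv ℝ f x d‖
        = ‖(fderiv ℝ f (x + t • d) - fderiv ℝ f x) d‖ := rfl
      _ ≤ ‖fderiv ℝ f (x + t • d) - fderiv ℝ f x‖ * ‖d‖ := ContinuousLinearMap.le_opNorm _ _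
      _ ≤ K * ‖t • d‖ * ‖d‖ := by
          gcongr; simpa using hf' (x + t • d) x
      _ = K * t * ‖d‖ ^ 2 := by rw [norm_smul, Real.norm_of_nonneg ht.1]; ring
  have := image_norm_le_of_norm_deriv_right_le_deriv_boundary
    (fun t _ => (hg t).continuousAt.continuousWithinAt) (fun t _ => (hg t).hasDerivWithinAt)
    (by simp [g]) hB hbound (right_mem_Icc.2 zero_le_one)
  simpa [g] using this

end Taylor

section Gradient

variable {F : Type*} [NormedAddCommGroup F] [InnerProductSpace ℝ F] [CompleteSpace F]
  {L : F → ℝ}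

theorem ContDiff.gradient {m n : WithTop ℕ∞} (hL : ContDiff ℝ n L) (hmn : m + 1 ≤ n) :
    ContDiff ℝ m (gradient L) :=
  (toDual ℝ F).symm.toContinuousLinearEquiv.contDiff.comp (hL.fderiv_right hmn)

theorem apply_add_le_of_lipschitz_gradient {β : ℝ} (hL : Differentiable ℝ L)
    (hgrad : ∀ x y, ‖gradient L x - gradient L y‖ ≤ β * ‖x - y‖) (x d : F) :
    L (x + d) ≤ L x + ⟪gradient L x, d⟫_ℝ + β / 2 * ‖d‖ ^ 2 := by
  have hfderiv : ∀ x y, ‖fderiv ℝ L x - fderiv ℝ L y‖ ≤ β * ‖x - y‖ := fun x y => by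
    rw [← toDual_gradient, ← toDual_gradient, ← map_sub, LinearIsometryEquiv.norm_map]
    exact hgrad x y
  have := (le_abs_self _).trans (norm_sub_sub_fderiv_le_of_lipschitz_fderiv hL hfderiv x d)
  rw [← toDual_gradient, toDual_apply_apply] at this
  linarith

theorem inner_fderiv_gradient_comm (hL : ContDiff ℝ 2 L) (x u w : F) :
    ⟪fderiv ℝ (gradient L) x u, w⟫_ℝ = ⟪fderiv ℝ (gradient L) x w, u⟫_ℝ := by
  have hH : ∀ a, fderiv ℝ (gradient L) x a = (toDual ℝ F).symm (fderiv ℝ (fderiv ℝ L) x a) := by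
    intro a
    rw [show gradient L = (toDual ℝ F).symm ∘ fderiv ℝ L from rfl,
      LinearIsometryEquiv.comp_fderiv]
    rfl
  rw [hH, hH, toDual_symm_apply, toDual_symm_apply]
  exact hL.contDiffAt.isSymmSndFDerivAt (by simp) u w

theorem inner_gradient_gradient_add_smul_ge {β₃ ρ : ℝ} (hL : ContDiff ℝ 2 L)
    (hHessLip : ∀ x y, ‖fderiv ℝ (gradient L) x - fderiv ℝ (gradient L) y‖ ≤ β₃ * ‖x - y‖)
    (hρ : 0 ≤ ρ) {v : F} (hv : ‖v‖ = 1) (x : F) :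
    ‖gradient L x‖ ^ 2 - ρ * ‖fderiv ℝ (gradient L) x (gradient L x)‖
        - ρ ^ 2 * β₃ / 2 * ‖gradient L x‖
      ≤ ⟪gradient L x, gradient L (x + ρ • v)⟫_ℝ := by
  set g := gradient L x
  set H := fderiv ℝ (gradient L) x
  set r := gradient L (x + ρ • v) - g - H (ρ • v) with hr
  have hr_le : ‖r‖ ≤ β₃ / 2 * ρ ^ 2 := by
    have := norm_sub_sub_fderiv_le_of_lipschitz_fderiv
      ((hL.gradient (by norm_num)).differentiable one_ne_zero) hHessLip x (ρ • v)
    rwa [norm_smul, Real.norm_of_nonneg hρ, hv, mul_one] at this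
  have hsplit : ⟪g, gradient L (x + ρ • v)⟫_ℝ = ‖g‖ ^ 2 + ρ * ⟪H g, v⟫_ℝ + ⟪g, r⟫_ℝ := by
    rw [show gradient L (x + ρ • v) = g + ρ • H v + r by rw [hr, map_smul]; abel,
      inner_add_right, inner_add_right, real_inner_self_eq_norm_sq, real_inner_smul_right,
      real_inner_comm, inner_fderiv_gradient_comm hL]
  have hHv : -‖H g‖ ≤ ⟪H g, v⟫_ℝ := by
    simpa [hv] using neg_le_of_abs_le (abs_real_inner_le_norm (H g) v)
  have hgr : -(‖g‖ * ‖r‖) ≤ ⟪g, r⟫_ℝ := neg_le_of_abs_le (abs_real_inner_le_norm g r)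
  linarith [mul_le_mul_of_nonneg_left hHv hρ, mul_le_mul_of_nonneg_left hr_le (norm_nonneg g)]

end Gradient

theorem sam_one_step_loss_bound_general
    {p : ℕ} (L : EuclideanSpace ℝ (Fin p) → ℝ)
    (hL : ContDiff ℝ 2 L)
    (β β₃ : ℝ) (hβ : 0 < β)
    (hHess : ∀ x, ‖fderiv ℝ (gradient L) x‖ ≤ β)
    (hHessLip : ∀ x y, ‖fderiv ℝ (gradient L) x - fderiv ℝ (gradient L) y‖ ≤ β₃ * ‖x - y‖)
    (η ρ : ℝ) (hη : 0 < η) (hρ : 0 < ρ)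
    (θ v : EuclideanSpace ℝ (Fin p)) (hv : ‖v‖ = 1) :
    L (θ - η • gradient L (θ + ρ • v))
      ≤ L θ - 3 * η / 4 * ‖gradient L θ‖ ^ 2
          + η * ρ * ‖fderiv ℝ (gradient L) θ (gradient L θ)‖
          + η * ρ ^ 2 * β₃ / 2 * ‖gradient L θ‖
          + η ^ 2 * β * (‖gradient L θ‖ ^ 2 + ρ ^ 2 * β ^ 2) := by
  have hgradLip : ∀ x y, ‖gradient L x - gradient L y‖ ≤ β * ‖x - y‖ := fun x y =>
    convex_univ.norm_image_sub_le_of_norm_fderiv_le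
      (fun z _ => (hL.gradient (by norm_num)).differentiable one_ne_zero z)
      (fun z _ => hHess z) trivial trivial
  have hdescent := apply_add_le_of_lipschitz_gradient (hL.differentiable two_ne_zero) hgradLip
    θ (-(η • gradient L (θ + ρ • v)))
  rw [← sub_eq_add_neg, inner_neg_right, real_inner_smul_right, norm_neg, norm_smul,
    Real.norm_of_nonneg hη.le, mul_pow] at hdescent
  have hinner := mul_le_mul_of_nonneg_left
    (inner_gradient_gradient_add_smul_ge hL hHessLip hρ.le hv θ) hη.le
  have hsq := mul_le_mul_of_nonneg_left (sq_norm_apply_add_le hgradLip θ (ρ • v))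
    (by positivity : 0 ≤ β / 2 * η ^ 2)
  rw [norm_smul, Real.norm_of_nonneg hρ.le, hv, mul_one] at hsq
  linarith [mul_nonneg hη.le (sq_nonneg ‖gradient L θ‖)]

/-- one-step SAM loss estimate: If `L` is `β`-smooth (`‖∇²L‖ ≤ β`),
`μ`-PL with `min L = 0`, the Hessian is `β₃`-Lipschitz, `‖v‖ = 1` and `η ≤ 1/(4β)`,
then for `θ⁺ = θ − η ∇L(θ + ρ v)`:
`L(θ⁺) ≤ L(θ) − (3η/4)‖∇L(θ)‖² + ηρ‖∇²L(θ)∇L(θ)‖ + (ηρ²β₃/2)‖∇L(θ)‖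
            + η²β(‖∇L(θ)‖² + ρ²β²)`. -/
theorem sam_one_step_loss_bound
    {p : ℕ} (L : EuclideanSpace ℝ (Fin p) → ℝ)
    (hL : ContDiff ℝ 2 L)
    (μ β β₃ : ℝ) (hμ : 0 < μ) (hβ : 0 < β) (hβ₃ : 0 < β₃)
    (hnonneg : ∀ x, 0 ≤ L x)
    (hPL : ∀ x, ‖gradient L x‖ ^ 2 ≥ 2 * μ * L x)
    (hHess : ∀ x, ‖fderiv ℝ (gradient L) x‖ ≤ β)
    (hHessLip : ∀ x y, ‖fderiv ℝ (gradient L) x - fderiv ℝ (gradient L) y‖ ≤ β₃ * ‖x - y‖)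
    (η ρ : ℝ) (hη : 0 < η) (hηβ : η ≤ 1 / (4 * β)) (hρ : 0 < ρ)
    (θ v : EuclideanSpace ℝ (Fin p)) (hv : ‖v‖ = 1) :
    L (θ - η • gradient L (θ + ρ • v))
      ≤ L θ - 3 * η / 4 * ‖gradient L θ‖ ^ 2
          + η * ρ * ‖fderiv ℝ (gradient L) θ (gradient L θ)‖
          + η * ρ ^ 2 * β₃ / 2 * ‖gradient L θ‖
          + η ^ 2 * β * (‖gradient L θ‖ ^ 2 + ρ ^ 2 * β ^ 2) :=
  sam_one_step_loss_bound_general L hL β β₃ hβ hHess hHessLip η ρ hη hρ θ v hv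
end
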